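/- arXiv:1812.09619 — 6 statements merged into one kernel-verified Lean document; each statement's English description precedes it below -/
import Mathlib

section
/- Calibration of the LA attention index from default-choice probabilities: Suppose P is generated by a logit-attention HRC rule with attention index η ∈ Δ(2^X), η > 0 on every subset, i.e. p(o,A) = η(∅)/Σ_{C⊆A} η(C) for every nonempty A ⊆ X (and p(o,∅)=1 with the convention that the sum over C⊆∅ is η(∅)). Then for every D ⊆ X, η(D) = η(∅) · Σ_{B⊆D} (−1)^{|D\B|} / p(o,B), and in particular η(D)/η(X-normalization) can be computed as Σ_{B⊆D} (−1)^{|D\B|} p(o,X)/p(o,B) after rescaling so that Σ_{C⊆X} η(C) = η(∅)/p(o,X). -/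
open Classical Finset

/-!
The LA rule says exactly that the cumulative attention `S A = ∑_{C ⊆ A} η C` equals
`η ∅ / p(o,A)` for every menu `A` (for `A = ∅` as well, both sides being `η ∅`).
Möbius inversion on the Boolean lattice, whose Möbius function is `μ(B, D) = (-1)^|D \ B|`,
recovers `η` from `S`; the normalization `S X = 1` forces `p(o,X) = η ∅`.
-/

namespace Finset

variable {α R : Type*} [DecidableEq α] [Ring R]

theorem sum_Icc_neg_one_pow_card_sdiff {C D : Finset α} (hCD : C ⊆ D) :
    ∑ B ∈ Icc C D, (-1 : R) ^ #(D \ B) = if C = D then 1 else 0 := by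
  have reindex : ∑ B ∈ Icc C D, (-1 : R) ^ #(D \ B) = ∑ E ∈ (D \ C).powerset, (-1 : R) ^ #E := by
    refine sum_nbij' (D \ ·) (D \ ·) ?_ ?_ ?_ ?_ fun _ _ => rfl
    · intro B hB
      simpa using sdiff_subset_sdiff subset_rfl (mem_Icc.1 hB).1
    · intro E hE
      rw [mem_powerset, subset_sdiff] at hE
      exact mem_Icc.2 ⟨subset_sdiff.2 ⟨hCD, hE.2.symm⟩, sdiff_subset⟩
    · intro B hB
      exact sdiff_sdiff_eq_self (mem_Icc.1 hB).2
    · intro E hE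
      exact sdiff_sdiff_eq_self ((mem_powerset.1 hE).trans sdiff_subset)
  have alternating : ∑ E ∈ (D \ C).powerset, (-1 : R) ^ #E = if D \ C = ∅ then 1 else 0 := by
    exact_mod_cast congrArg (Int.cast : ℤ → R) sum_powerset_neg_one_pow_card
  have empty_iff : D \ C = ∅ ↔ C = D :=
    sdiff_eq_empty_iff_subset.trans ⟨hCD.antisymm, fun h => h ▸ subset_rfl⟩
  rw [reindex, alternating]
  simp only [empty_iff]

theorem sum_powerset_neg_one_pow_card_sdiff_mul_sum_powerset (f : Finset α → R) (D : Finset α) :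
    ∑ B ∈ D.powerset, (-1 : R) ^ #(D \ B) * ∑ C ∈ B.powerset, f C = f D :=
  calc ∑ B ∈ D.powerset, (-1 : R) ^ #(D \ B) * ∑ C ∈ B.powerset, f C
      = ∑ B ∈ D.powerset, ∑ C ∈ B.powerset, (-1 : R) ^ #(D \ B) * f C := by
        simp_rw [mul_sum]
    _ = ∑ C ∈ D.powerset, ∑ B ∈ Icc C D, (-1 : R) ^ #(D \ B) * f C :=
        sum_comm' fun B C => by simp only [mem_powerset, mem_Icc]; grind
    _ = ∑ C ∈ D.powerset, if C = D then f D else 0 := by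
        refine sum_congr rfl fun C hC => ?_
        rw [← sum_mul, sum_Icc_neg_one_pow_card_sdiff (mem_powerset.1 hC)]
        split_ifs with h <;> simp [h]
    _ = f D := by simp

end Finset

theorem sum_powerset_eq_div_of_default_prob {X K : Type*} [DecidableEq X] [Field K]
    {η po : Finset X → K} (hη : η ∅ ≠ 0)
    (hpo : ∀ A : Finset X, A.Nonempty → po A = η ∅ / ∑ C ∈ A.powerset, η C)
    (hpo0 : po ∅ = 1) (A : Finset X) :
    ∑ C ∈ A.powerset, η C = η ∅ / po A := by
  rcases A.eq_empty_or_nonempty with rfl | hA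
  · simp [hpo0]
  · rw [hpo A hA, div_div_cancel₀ hη]

/-- Calibration of the LA attention index from default-choice probabilities:
if `p(o,A) = η(∅) / ∑_{C ⊆ A} η(C)` for a strictly positive `η ∈ Δ(2^X)`, then
`η(D) = η(∅) · ∑_{B ⊆ D} (-1)^{|D\B|} / p(o,B)`, and since
`∑_{C ⊆ X} η(C) = η(∅)/p(o,X)` (= 1), also
`η(D) = ∑_{B ⊆ D} (-1)^{|D\B|} · p(o,X)/p(o,B)`. -/
theorem LA_attention_index_calibration
    {X : Type*} [Fintype X] [DecidableEq X]
    (η : Finset X → ℝ) (po : Finset X → ℝ)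
    (hpos : ∀ C : Finset X, 0 < η C)
    (hsum : ∑ C ∈ (Finset.univ : Finset X).powerset, η C = 1)
    (hpo : ∀ A : Finset X, A.Nonempty → po A = η ∅ / ∑ C ∈ A.powerset, η C)
    (hpo0 : po ∅ = 1) :
    (∀ D : Finset X,
      η D = η ∅ * ∑ B ∈ D.powerset, (-1 : ℝ) ^ (D \ B).card / po B) ∧
    (∀ D : Finset X,
      η D = ∑ B ∈ D.powerset,
        (-1 : ℝ) ^ (D \ B).card * (po Finset.univ / po B)) := by
  have cumulative := sum_powerset_eq_div_of_default_prob (hpos ∅).ne' hpo hpo0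
  have recovery : ∀ D : Finset X,
      η D = η ∅ * ∑ B ∈ D.powerset, (-1 : ℝ) ^ (D \ B).card / po B := by
    intro D
    rw [← sum_powerset_neg_one_pow_card_sdiff_mul_sum_powerset η D, mul_sum]
    exact sum_congr rfl fun B _ => by rw [cumulative B]; ring
  have po_univ : po univ = η ∅ := (eq_of_div_eq_one ((cumulative univ).symm.trans hsum)).symm
  refine ⟨recovery, fun D => ?_⟩
  rw [recovery D, mul_sum, po_univ]
  exact sum_congr rfl fun B _ => by ring
end

section
/- The MM consideration rule is a special case of the LA rule: if m_A(D) = Π_{a∈D} γ(a) · Π_{b∈A\D} (1 − γ(b)) for γ : X → (0,1), then setting η(C) = Π_{a∈X\C}(1−γ(a)) · Π_{b∈C} γ(b) for C ⊆ X, one has η ∈ Δ(2^X), η strictly positive, and m_A(D) = η(D)/Σ_{C⊆A} η(C) for every D ⊆ A ⊆ X. -/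
/-!
For `D ⊆ A`, splitting `X \ D = (A \ D) ∪ (X \ A)` gives `η(D) = m_A(D) · ∏_{b ∈ X \ A} (1 - γ b)`.
Summing over `D ⊆ A` and expanding `∏_{a ∈ A} (γ a + (1 - γ a)) = 1` shows that the
normalising constant `∑_{C ⊆ A} η(C)` is exactly `∏_{b ∈ X \ A} (1 - γ b)`; for `A = X` it is `1`.
-/

open Classical Finset

namespace Finset

variable {ι R : Type*}

/-- The MM rule `m_A(D)`: each `a ∈ A` is considered independently with probability `γ a`. -/
def indepWeight [DecidableEq ι] [CommRing R] (γ : ι → R) (A D : Finset ι) : R :=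
  (∏ a ∈ D, γ a) * ∏ b ∈ A \ D, (1 - γ b)

section CommRing

variable [DecidableEq ι] [CommRing R] (γ : ι → R)

theorem indepWeight_eq_mul_prod_sdiff {A B D : Finset ι} (hDA : D ⊆ A) (hAB : A ⊆ B) :
    indepWeight γ B D = indepWeight γ A D * ∏ b ∈ B \ A, (1 - γ b) := by
  have hsplit : (∏ b ∈ B \ A, (1 - γ b)) * ∏ b ∈ A \ D, (1 - γ b) = ∏ b ∈ B \ D, (1 - γ b) := by
    rw [← sdiff_sdiff_sdiff_cancel_right hDA]
    exact prod_sdiff (sdiff_subset_sdiff hAB le_rfl)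
  rw [indepWeight, indepWeight, ← hsplit]
  ring

theorem sum_powerset_indepWeight_self (A : Finset ι) :
    ∑ D ∈ A.powerset, indepWeight γ A D = 1 := by
  simp only [indepWeight, ← prod_add, add_sub_cancel, prod_const_one]

theorem sum_powerset_indepWeight {A B : Finset ι} (hAB : A ⊆ B) :
    ∑ D ∈ A.powerset, indepWeight γ B D = ∏ b ∈ B \ A, (1 - γ b) := by
  rw [sum_congr rfl fun D hD => indepWeight_eq_mul_prod_sdiff γ (mem_powerset.mp hD) hAB,
    ← sum_mul, sum_powerset_indepWeight_self, one_mul]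

end CommRing

section StrictOrderedRing

variable [CommRing R] [PartialOrder R] [IsStrictOrderedRing R] {γ : ι → R}

theorem prod_one_sub_pos_of_lt_one (hγ : ∀ a, γ a < 1) (s : Finset ι) :
    0 < ∏ b ∈ s, (1 - γ b) :=
  prod_pos fun b _ => sub_pos.mpr (hγ b)

theorem indepWeight_pos [DecidableEq ι] (hγ : ∀ a, γ a ∈ Set.Ioo (0 : R) 1) (A D : Finset ι) :
    0 < indepWeight γ A D :=
  mul_pos (prod_pos fun a _ => (hγ a).1) (prod_one_sub_pos_of_lt_one (fun a => (hγ a).2) _)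

end StrictOrderedRing

end Finset

/-- The MM (independent consideration) rule is a special case of the LA rule:
with `η(C) = ∏_{a ∈ X\C}(1-γ(a)) · ∏_{b ∈ C} γ(b)`, `η` is a strictly positive
probability measure on `2^X` and `m_A(D) = η(D)/∑_{C ⊆ A} η(C)` for `D ⊆ A`. -/
theorem MM_is_special_case_of_LA
    {X : Type*} [Fintype X] [DecidableEq X]
    (γ : X → ℝ) (m : Finset X → Finset X → ℝ) (η : Finset X → ℝ)
    (hγ : ∀ a : X, γ a ∈ Set.Ioo (0 : ℝ) 1)
    (hm : ∀ A D : Finset X, D ⊆ A →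
      m A D = (∏ a ∈ D, γ a) * ∏ b ∈ A \ D, (1 - γ b))
    (hη : ∀ C : Finset X,
      η C = (∏ a ∈ Finset.univ \ C, (1 - γ a)) * ∏ b ∈ C, γ b) :
    (∀ C : Finset X, 0 < η C) ∧
    (∑ C ∈ (Finset.univ : Finset X).powerset, η C = 1) ∧
    (∀ A D : Finset X, D ⊆ A → m A D = η D / ∑ C ∈ A.powerset, η C) := by
  obtain rfl : η = indepWeight γ univ := funext fun C => (hη C).trans (mul_comm _ _)
  refine ⟨indepWeight_pos hγ univ, sum_powerset_indepWeight_self γ univ, fun A D hDA => ?_⟩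
  have hmA : m A D = indepWeight γ A D := hm A D hDA
  have hden := prod_one_sub_pos_of_lt_one (fun a => (hγ a).2) (univ \ A)
  rw [hmA, sum_powerset_indepWeight γ (subset_univ A),
    indepWeight_eq_mul_prod_sdiff γ hDA (subset_univ A), mul_div_cancel_right₀ _ hden.ne']
end

section
/- The MM consideration rule is a special case of the RCG rule: with γ : X → (0,1) and η(C) = Π_{a∈X\C}(1−γ(a)) · Π_{b∈C} γ(b), for every nonempty A ⊆ X and D ⊆ A one has Σ_{C⊆X : C∩A = D} η(C) = Π_{a∈D} γ(a) · Π_{b∈A\D}(1 − γ(b)). -/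
open Classical Finset

/-!
Each `C ⊆ X` with `C ∩ A = D` splits uniquely as `D ∪ E` with `E ⊆ X \ A`, and the product weight `η`
factors along the partition `X = A ∪ (X \ A)`: `η (D ∪ E)` is the MM weight of `D` in `A` times the
analogous weight of `E` in `X \ A`. The latter weights sum to `1` over all `E ⊆ X \ A`, since
`∏ (γ + (1 - γ)) = 1` expands into exactly this sum.
-/

namespace Finset

variable {α : Type*} [DecidableEq α]

theorem sum_filter_inter_eq_sum_powerset_sdiff {β : Type*} [AddCommMonoid β]
    {U A D : Finset α} (hDA : D ⊆ A) (hDU : D ⊆ U) (f : Finset α → β) :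
    ∑ C ∈ U.powerset.filter (fun C => C ∩ A = D), f C = ∑ E ∈ (U \ A).powerset, f (D ∪ E) := by
  have hsplit : ∀ C ∈ U.powerset.filter (fun C => C ∩ A = D), D ∪ C \ A = C := by
    grind
  refine sum_nbij' (· \ A) (D ∪ ·) ?_ ?_ hsplit ?_ fun C hC => by rw [hsplit C hC]
  all_goals grind

/-- The probability that the random set `{a ∈ s | a is drawn}`, each `a` drawn independently with
probability `p a`, equals `t`. -/
def bernoulliWeight {R : Type*} [CommRing R] (p : α → R) (s t : Finset α) : R :=
  (∏ b ∈ t, p b) * ∏ a ∈ s \ t, (1 - p a)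

variable {R : Type*} [CommRing R] (p : α → R)

theorem sum_bernoulliWeight_powerset (s : Finset α) :
    ∑ t ∈ s.powerset, bernoulliWeight p s t = 1 := by
  simp only [bernoulliWeight, ← prod_add, add_sub_cancel, prod_const_one]

theorem bernoulliWeight_union {s s' t t' : Finset α} (hs : Disjoint s s') (ht : t ⊆ s)
    (ht' : t' ⊆ s') :
    bernoulliWeight p (s ∪ s') (t ∪ t') = bernoulliWeight p s t * bernoulliWeight p s' t' := by
  have hsdiff : (s ∪ s') \ (t ∪ t') = (s \ t) ∪ (s' \ t') := by
    grind [disjoint_left]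
  rw [bernoulliWeight, bernoulliWeight, bernoulliWeight, hsdiff,
    prod_union (hs.mono ht ht'), prod_union (hs.mono sdiff_subset sdiff_subset)]
  ring

end Finset

theorem MM_is_special_case_of_RCG_general
    {X : Type*} [Fintype X] [DecidableEq X]
    (γ : X → ℝ) (η : Finset X → ℝ)
    (hη : ∀ C : Finset X,
      η C = (∏ a ∈ Finset.univ \ C, (1 - γ a)) * ∏ b ∈ C, γ b) :
    ∀ A : Finset X, A.Nonempty → ∀ D ⊆ A,
      ∑ C ∈ (Finset.univ : Finset X).powerset.filter (fun C => C ∩ A = D), η C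
        = (∏ a ∈ D, γ a) * ∏ b ∈ A \ D, (1 - γ b) := by
  intro A _ D hD
  have hη_weight (C : Finset X) : η C = bernoulliWeight γ univ C := by
    rw [hη, bernoulliWeight, mul_comm]
  have hsplit : ∀ E ∈ (univ \ A).powerset,
      η (D ∪ E) = bernoulliWeight γ A D * bernoulliWeight γ (univ \ A) E := by
    intro E hE
    rw [hη_weight, ← bernoulliWeight_union γ disjoint_sdiff hD (mem_powerset.1 hE),
      union_sdiff_of_subset (subset_univ A)]
  rw [sum_filter_inter_eq_sum_powerset_sdiff hD (subset_univ D), sum_congr rfl hsplit, ← mul_sum,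
    sum_bernoulliWeight_powerset, mul_one, bernoulliWeight]

/-- The MM rule is a special case of the RCG (random categorization) rule:
with `η(C) = ∏_{a ∈ X\C}(1-γ(a)) · ∏_{b ∈ C} γ(b)`, for every nonempty menu `A`
and every `D ⊆ A`, `∑_{C ⊆ X : C ∩ A = D} η(C) = ∏_{a∈D} γ(a) · ∏_{b∈A\D} (1-γ(b))`. -/
theorem MM_is_special_case_of_RCG
    {X : Type*} [Fintype X] [DecidableEq X]
    (γ : X → ℝ) (η : Finset X → ℝ)
    (hγ : ∀ a : X, γ a ∈ Set.Ioo (0 : ℝ) 1)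
    (hη : ∀ C : Finset X,
      η C = (∏ a ∈ Finset.univ \ C, (1 - γ a)) * ∏ b ∈ C, γ b) :
    ∀ A : Finset X, A.Nonempty → ∀ D ⊆ A,
      ∑ C ∈ (Finset.univ : Finset X).powerset.filter (fun C => C ∩ A = D), η C
        = (∏ a ∈ D, γ a) * ∏ b ∈ A \ D, (1 - γ b) :=
  MM_is_special_case_of_RCG_general γ η hη
end

section
/- Unraveling the recursion for the calibrated full-consideration rule: Let X be finite and for each nonempty A ⊆ X let m_A be a probability measure on 2^A with m_A(A) > 0. Suppose p(a,A) = Σ_{D⊆A} m_A(D) · q(a,D) for all a ∈ A and all nonempty A, where q(a,D) = Σ_{≻} π(≻)·1[a is ≻-max of D] (with q(a,∅)=0). Then the recursively defined function p_π(a,A) := (p(a,A) − Σ_{C⊊A} m_A(C) p_π(a,C)) / m_A(A) satisfies p_π(a,A) = q(a,A) = Σ_{≻} π(≻)·1[a ≻-max of A] for all a ∈ A and nonempty A ⊆ X. -/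
open Classical Finset

/-- `a` is the `r`-maximum of the consideration set `D`. -/
def IsMaxOf {X : Type*} (r : X → X → Prop) (a : X) (D : Finset X) : Prop :=
  a ∈ D ∧ ∀ b ∈ D, b ≠ a → r a b

/-- `g` itself solves the recursion, and since `m A A ≠ 0` the recursion determines the value
on `A` from the values on proper subsets of `A`. -/
theorem eq_of_calibration_recursion {α K : Type*} [DecidableEq α] [Field K] (P : Finset α → Prop)
    (m : Finset α → Finset α → K) (f g : Finset α → K)
    (hm : ∀ A, P A → m A A ≠ 0)
    (hf : ∀ A, P A → f A =
      (∑ D ∈ A.powerset, m A D * g D - ∑ C ∈ A.powerset.erase A, m A C * f C) / m A A)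
    (hout : ∀ A, ¬ P A → f A = g A) (A : Finset α) : f A = g A := by
  induction A using Finset.strongInduction with
  | _ A ih =>
    by_cases hA : P A
    · have hsub : ∑ C ∈ A.powerset.erase A, m A C * f C =
          ∑ C ∈ A.powerset.erase A, m A C * g C := by
        refine sum_congr rfl fun C hC => ?_
        obtain ⟨hne, hCA⟩ := mem_erase.mp hC
        rw [ih C ((mem_powerset.mp hCA).ssubset_of_ne hne)]
      rw [hf A hA, hsub, ← add_sum_erase _ _ (mem_powerset_self A), add_sub_cancel_right,
        mul_div_cancel_left₀ _ (hm A hA)]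
    · exact hout A hA

theorem calibrated_rule_equals_random_utility_general
    {X : Type*} [DecidableEq X] {n : ℕ}
    (pref : Fin n → X → X → Prop) (π : Fin n → ℝ)
    (m : Finset X → Finset X → ℝ) (p pπ : X → Finset X → ℝ)
    (hmA : ∀ A : Finset X, A.Nonempty → 0 < m A A)
    (hp : ∀ A : Finset X, A.Nonempty → ∀ a ∈ A,
      p a A = ∑ D ∈ A.powerset,
        m A D * ∑ i, π i * (if IsMaxOf (pref i) a D then (1 : ℝ) else 0))
    (hpπ0 : ∀ (a : X) (C : Finset X), a ∉ C → pπ a C = 0)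
    (hpπ : ∀ A : Finset X, A.Nonempty → ∀ a ∈ A,
      pπ a A = (p a A - ∑ C ∈ A.powerset.erase A, m A C * pπ a C) / m A A) :
    ∀ A : Finset X, A.Nonempty → ∀ a ∈ A,
      pπ a A = ∑ i, π i * (if IsMaxOf (pref i) a A then (1 : ℝ) else 0) := by
  intro A _ a _
  refine eq_of_calibration_recursion (a ∈ ·) m (pπ a)
    (fun D => ∑ i, π i * if IsMaxOf (pref i) a D then 1 else 0)
    (fun B haB => (hmA B ⟨a, haB⟩).ne') (fun B haB => ?_) (fun C haC => ?_) A
  · rw [hpπ B ⟨a, haB⟩ a haB, hp B ⟨a, haB⟩ a haB]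
  · have hq : ∀ i, ¬ IsMaxOf (pref i) a C := fun i hmax => haC hmax.1
    simp only [hpπ0 a C haC, hq, if_false, mul_zero, sum_const_zero]

/-- Unraveling the recursion for the calibrated full-consideration rule:
if `p(a,A) = ∑_{D ⊆ A} m_A(D) q(a,D)` with `q(a,D) = ∑_≻ π(≻) 1[a ≻-max of D]`
and `m_A(A) > 0`, then the recursively defined
`p_π(a,A) = (p(a,A) − ∑_{C ⊊ A} m_A(C) p_π(a,C)) / m_A(A)`
satisfies `p_π(a,A) = q(a,A)` for all `a ∈ A`. -/
theorem calibrated_rule_equals_random_utility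
    {X : Type*} [Fintype X] [DecidableEq X] {n : ℕ}
    (pref : Fin n → X → X → Prop) (π : Fin n → ℝ)
    (m : Finset X → Finset X → ℝ) (p pπ : X → Finset X → ℝ)
    (hord : ∀ i, IsStrictTotalOrder X (pref i))
    (hπ : ∀ i, 0 ≤ π i) (hπ1 : ∑ i, π i = 1)
    (hm : ∀ A : Finset X, A.Nonempty →
      (∀ D ∈ A.powerset, 0 ≤ m A D) ∧ (∑ D ∈ A.powerset, m A D = 1))
    (hmA : ∀ A : Finset X, A.Nonempty → 0 < m A A)
    (hp : ∀ A : Finset X, A.Nonempty → ∀ a ∈ A,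
      p a A = ∑ D ∈ A.powerset,
        m A D * ∑ i, π i * (if IsMaxOf (pref i) a D then (1 : ℝ) else 0))
    (hpπ0 : ∀ (a : X) (C : Finset X), a ∉ C → pπ a C = 0)
    (hpπ : ∀ A : Finset X, A.Nonempty → ∀ a ∈ A,
      pπ a A = (p a A - ∑ C ∈ A.powerset.erase A, m A C * pπ a C) / m A A) :
    ∀ A : Finset X, A.Nonempty → ∀ a ∈ A,
      pπ a A = ∑ i, π i * (if IsMaxOf (pref i) a A then (1 : ℝ) else 0) :=
  calibrated_rule_equals_random_utility_general pref π m p pπ hmA hp hpπ0 hpπ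
end

section
/- Identification (Theorem 4): Let X be finite and suppose a complete stochastic choice rule P is represented by two LA-HRC pairs (m, π) and (m′, π′), where m and m′ are both logit-attention rules generated by strictly positive attention indices η, η′ ∈ Δ(2^X). Then m = m′, and moreover the induced full-consideration choice rules agree: for every nonempty A ⊆ X and a ∈ A, Σ_{≻} π(≻)·1[a ≻-max of A] = Σ_{≻} π′(≻)·1[a ≻-max of A]. -/
/-
The default-choice probabilities `p(o, A) = η ∅ / ∑_{C ⊆ A} η C` pin down the partial sums
`∑_{C ⊆ A} η C` up to the common factor `η ∅`, so `η'` is proportional to `η` by Möbius inversion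
on the Boolean lattice, and the normalisation `∑_C η C = 1` forces `η' = η`. With `m = m'` in hand,
the representations of `p(a, ·)` say that the weighted sums `∑_{D ⊆ A} η D ρ(a, D)` agree for the
two full-consideration rules `ρ, ρ'`; Möbius inversion once more and `η > 0` give `ρ = ρ'`.
-/

open Classical Finset

namespace Finset

variable {α M : Type*}

theorem sum_powerset_eq_sum_ssubsets_add [AddCommMonoid M] (s : Finset α) (f : Finset α → M) :
    ∑ t ∈ s.powerset, f t = ∑ t ∈ s.ssubsets, f t + f s :=
  (sum_erase_add _ _ (mem_powerset_self s)).symm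

theorem eq_of_sum_powerset_eq [AddCancelCommMonoid M] {f g : Finset α → M}
    (h : ∀ s : Finset α, ∑ t ∈ s.powerset, f t = ∑ t ∈ s.powerset, g t) : f = g := by
  funext s
  induction s using strongInduction with
  | _ s ih =>
    have hssubsets : ∑ t ∈ s.ssubsets, f t = ∑ t ∈ s.ssubsets, g t :=
      sum_congr rfl fun t ht => ih t (mem_ssubsets.1 ht)
    have hs := h s
    rwa [sum_powerset_eq_sum_ssubsets_add, sum_powerset_eq_sum_ssubsets_add, hssubsets,
      add_left_cancel_iff] at hs

theorem eq_of_sum_powerset_mul_eq {R : Type*} [Ring R] [NoZeroDivisors R] {w f g : Finset α → R}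
    (hw : ∀ t, w t ≠ 0)
    (h : ∀ s : Finset α, ∑ t ∈ s.powerset, w t * f t = ∑ t ∈ s.powerset, w t * g t) : f = g :=
  funext fun t => mul_left_cancel₀ (hw t) (congrFun (eq_of_sum_powerset_eq h) t)

end Finset

section LogitAttention

variable {X : Type*}

theorem sum_powerset_pos {η : Finset X → ℝ} (hpos : ∀ C, 0 < η C) (A : Finset X) :
    0 < ∑ C ∈ A.powerset, η C :=
  sum_pos (fun C _ => hpos C) ⟨∅, empty_mem_powerset A⟩

theorem eq_of_div_sum_powerset_empty_eq [Fintype X] {η η' : Finset X → ℝ}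
    (hpos : ∀ C, 0 < η C) (hpos' : ∀ C, 0 < η' C)
    (hsum : ∑ C ∈ (univ : Finset X).powerset, η C = 1)
    (hsum' : ∑ C ∈ (univ : Finset X).powerset, η' C = 1)
    (h : ∀ A : Finset X, A.Nonempty →
      η ∅ / ∑ C ∈ A.powerset, η C = η' ∅ / ∑ C ∈ A.powerset, η' C) : η = η' := by
  have hcross : ∀ A : Finset X, η ∅ * ∑ C ∈ A.powerset, η' C = η' ∅ * ∑ C ∈ A.powerset, η C := by
    intro A
    rcases A.eq_empty_or_nonempty with rfl | hA
    · simp only [powerset_empty, sum_singleton, mul_comm]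
    · exact (div_eq_div_iff (sum_powerset_pos hpos A).ne' (sum_powerset_pos hpos' A).ne').1 (h A hA)
  set c := η' ∅ / η ∅
  have hprop : ∀ A : Finset X, ∑ C ∈ A.powerset, η' C = ∑ C ∈ A.powerset, c * η C := by
    intro A
    rw [← mul_sum, div_mul_eq_mul_div, ← hcross, mul_div_cancel_left₀ _ (hpos ∅).ne']
  have hc : c = 1 := by
    simpa only [hsum, hsum', ← mul_sum, mul_one, eq_comm] using hprop univ
  funext C
  simpa only [hc, one_mul, eq_comm] using congrFun (eq_of_sum_powerset_eq hprop) C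

theorem sum_powerset_logit_mul {η : Finset X → ℝ} {m : Finset X → Finset X → ℝ} {A : Finset X}
    (hLA : ∀ D ⊆ A, m A D = η D / ∑ C ∈ A.powerset, η C) (f : Finset X → ℝ) :
    ∑ D ∈ A.powerset, m A D * f D = (∑ D ∈ A.powerset, η D * f D) / ∑ C ∈ A.powerset, η C := by
  rw [sum_div]
  refine sum_congr rfl fun D hD => ?_
  rw [hLA D (mem_powerset.1 hD), div_mul_eq_mul_div]

end LogitAttention

noncomputable def fullConsiderationProb {X : Type*} {n : ℕ} (pref : Fin n → X → X → Prop)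
    (π : Fin n → ℝ) (a : X) (D : Finset X) : ℝ :=
  ∑ i, π i * if IsMaxOf (pref i) a D then 1 else 0

theorem fullConsiderationProb_eq_zero_of_notMem {X : Type*} {n : ℕ} {pref : Fin n → X → X → Prop}
    {π : Fin n → ℝ} {a : X} {D : Finset X} (ha : a ∉ D) : fullConsiderationProb pref π a D = 0 :=
  sum_eq_zero fun i _ => by rw [if_neg fun h => ha h.1, mul_zero]

theorem LA_HRC_identification_general
    {X : Type*} [Fintype X] {n n' : ℕ}
    (η η' : Finset X → ℝ)
    (m m' : Finset X → Finset X → ℝ)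
    (pref : Fin n → X → X → Prop) (π : Fin n → ℝ)
    (pref' : Fin n' → X → X → Prop) (π' : Fin n' → ℝ)
    (p : X → Finset X → ℝ) (po : Finset X → ℝ)
    (hpos : ∀ C : Finset X, 0 < η C) (hpos' : ∀ C : Finset X, 0 < η' C)
    (hsum : ∑ C ∈ (Finset.univ : Finset X).powerset, η C = 1)
    (hsum' : ∑ C ∈ (Finset.univ : Finset X).powerset, η' C = 1)
    (hLA : ∀ A D : Finset X, D ⊆ A → m A D = η D / ∑ C ∈ A.powerset, η C)
    (hLA' : ∀ A D : Finset X, D ⊆ A → m' A D = η' D / ∑ C ∈ A.powerset, η' C)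
    (hrep : ∀ A : Finset X, A.Nonempty → ∀ a ∈ A,
      p a A = ∑ D ∈ A.powerset,
        m A D * ∑ i, π i * (if IsMaxOf (pref i) a D then (1 : ℝ) else 0))
    (hrep' : ∀ A : Finset X, A.Nonempty → ∀ a ∈ A,
      p a A = ∑ D ∈ A.powerset,
        m' A D * ∑ i, π' i * (if IsMaxOf (pref' i) a D then (1 : ℝ) else 0))
    (hpo : ∀ A : Finset X, A.Nonempty → po A = m A ∅)
    (hpo' : ∀ A : Finset X, A.Nonempty → po A = m' A ∅) :
    (∀ A D : Finset X, D ⊆ A → m A D = m' A D) ∧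
    (∀ A : Finset X, A.Nonempty → ∀ a ∈ A,
      ∑ i, π i * (if IsMaxOf (pref i) a A then (1 : ℝ) else 0)
        = ∑ i, π' i * (if IsMaxOf (pref' i) a A then (1 : ℝ) else 0)) := by
  obtain rfl : η = η' := eq_of_div_sum_powerset_empty_eq hpos hpos' hsum hsum' fun A hA => by
    rw [← hLA A ∅ A.empty_subset, ← hLA' A ∅ A.empty_subset, ← hpo A hA, hpo' A hA]
  refine ⟨fun A D hD => by rw [hLA A D hD, hLA' A D hD], fun A _ a _ => ?_⟩
  suffices fullConsiderationProb pref π a = fullConsiderationProb pref' π' a from congrFun this A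
  refine eq_of_sum_powerset_mul_eq (fun D => (hpos D).ne') fun B => ?_
  by_cases haB : a ∈ B
  · have hB := (hrep B ⟨a, haB⟩ a haB).symm.trans (hrep' B ⟨a, haB⟩ a haB)
    rwa [sum_powerset_logit_mul (hLA B), sum_powerset_logit_mul (hLA' B),
      div_left_inj' (sum_powerset_pos hpos B).ne'] at hB
  · refine sum_congr rfl fun D hD => ?_
    have haD : a ∉ D := fun h => haB (mem_powerset.1 hD h)
    rw [fullConsiderationProb_eq_zero_of_notMem haD, fullConsiderationProb_eq_zero_of_notMem haD]

/-- Identification: if a complete stochastic choice rule (including its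
default-choice probabilities) is represented by two LA-HRC pairs `(m, π)` and
`(m', π')`, generated by strictly positive attention indices `η, η' ∈ Δ(2^X)`,
then `m = m'` and the induced full-consideration choice rules agree. -/
theorem LA_HRC_identification
    {X : Type*} [Fintype X] [DecidableEq X] {n n' : ℕ}
    (η η' : Finset X → ℝ)
    (m m' : Finset X → Finset X → ℝ)
    (pref : Fin n → X → X → Prop) (π : Fin n → ℝ)
    (pref' : Fin n' → X → X → Prop) (π' : Fin n' → ℝ)
    (p : X → Finset X → ℝ) (po : Finset X → ℝ)
    (hpos : ∀ C : Finset X, 0 < η C) (hpos' : ∀ C : Finset X, 0 < η' C)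
    (hsum : ∑ C ∈ (Finset.univ : Finset X).powerset, η C = 1)
    (hsum' : ∑ C ∈ (Finset.univ : Finset X).powerset, η' C = 1)
    (hLA : ∀ A D : Finset X, D ⊆ A → m A D = η D / ∑ C ∈ A.powerset, η C)
    (hLA' : ∀ A D : Finset X, D ⊆ A → m' A D = η' D / ∑ C ∈ A.powerset, η' C)
    (hord : ∀ i, IsStrictTotalOrder X (pref i))
    (hord' : ∀ i, IsStrictTotalOrder X (pref' i))
    (hπ : ∀ i, 0 ≤ π i) (hπ1 : ∑ i, π i = 1)
    (hπ' : ∀ i, 0 ≤ π' i) (hπ1' : ∑ i, π' i = 1)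
    (hrep : ∀ A : Finset X, A.Nonempty → ∀ a ∈ A,
      p a A = ∑ D ∈ A.powerset,
        m A D * ∑ i, π i * (if IsMaxOf (pref i) a D then (1 : ℝ) else 0))
    (hrep' : ∀ A : Finset X, A.Nonempty → ∀ a ∈ A,
      p a A = ∑ D ∈ A.powerset,
        m' A D * ∑ i, π' i * (if IsMaxOf (pref' i) a D then (1 : ℝ) else 0))
    (hpo : ∀ A : Finset X, A.Nonempty → po A = m A ∅)
    (hpo' : ∀ A : Finset X, A.Nonempty → po A = m' A ∅) :
    (∀ A D : Finset X, D ⊆ A → m A D = m' A D) ∧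
    (∀ A : Finset X, A.Nonempty → ∀ a ∈ A,
      ∑ i, π i * (if IsMaxOf (pref i) a A then (1 : ℝ) else 0)
        = ∑ i, π' i * (if IsMaxOf (pref' i) a A then (1 : ℝ) else 0)) :=
  LA_HRC_identification_general η η' m m' pref π pref' π' p po hpos hpos' hsum hsum' hLA hLA' hrep
    hrep' hpo hpo'
end

section
/- LA with homogeneous preferences can violate regularity (attraction effect): there exist a finite set X = {a,b,c}, a strictly positive probability measure η on 2^X, and a strict linear order ≻ on X, such that the induced LA choice rule p(x,A) = Σ_{D⊆A, x is ≻-max of D} η(D)/Σ_{C⊆A} η(C) satisfies p(a, {a,b,c}) > p(a, {a,c}). Consequently the LA model is not nested in the random utility model. -/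
/-!
Rank the alternatives `0 ≻ 1 ≻ 2` and let the attention index put a large weight on the
consideration set `{0, 1}`. From the menu `{0, 2}` the alternative `0` is chosen with
probability `1/2`. Adding the inferior decoy `1` makes the heavy set `{0, 1}` available,
and since `0` wins in it, the probability of choosing `0` rises to `23/35`.
-/

open Classical Finset

noncomputable def laChoice {X : Type*} [DecidableEq X]
    (η : Finset X → ℝ) (r : X → X → Prop) (x : X) (A : Finset X) : ℝ :=
  (∑ D ∈ A.powerset,
      if x ∈ D ∧ ∀ y ∈ D, y ≠ x → r x y then η D else 0) /
    ∑ C ∈ A.powerset, η C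

theorem Finset.sum_powerset_singleton {α β : Type*} [AddCommMonoid β] (a : α)
    (f : Finset α → β) : ∑ t ∈ ({a} : Finset α).powerset, f t = f ∅ + f {a} := by
  simpa using sum_powerset_insert (notMem_empty a) f

theorem laChoice_eq_of_forall_rel {X : Type*} [DecidableEq X] (η : Finset X → ℝ)
    {r : X → X → Prop} {x : X} (hx : ∀ y, y ≠ x → r x y) (A : Finset X) :
    laChoice η r x A = (∑ D ∈ A.powerset with x ∈ D, η D) / ∑ D ∈ A.powerset, η D := by
  have hbest (D : Finset X) : (x ∈ D ∧ ∀ y ∈ D, y ≠ x → r x y) ↔ x ∈ D :=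
    and_iff_left fun y _ => hx y
  simp only [laChoice, sum_filter, hbest]

noncomputable def decoyAttention (C : Finset (Fin 3)) : ℝ :=
  if C = {0, 1} then 2 / 5 else 3 / 35

theorem decoyAttention_pos (C : Finset (Fin 3)) : 0 < decoyAttention C := by
  unfold decoyAttention
  split_ifs <;> norm_num

theorem sum_powerset_decoyAttention :
    ∑ C ∈ (univ : Finset (Fin 3)).powerset, decoyAttention C = 1 := by
  rw [show (univ : Finset (Fin 3)) = {0, 1, 2} by decide]
  simp +decide [decoyAttention, sum_powerset_insert, sum_powerset_singleton]
  norm_num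

theorem laChoice_decoyAttention_with_decoy :
    laChoice decoyAttention (· < ·) 0 {0, 1, 2} = 23 / 35 := by
  rw [laChoice_eq_of_forall_rel _ fun _ => Fin.pos_of_ne_zero]
  simp +decide [decoyAttention, sum_filter, sum_powerset_insert, sum_powerset_singleton]
  norm_num

theorem laChoice_decoyAttention_without_decoy :
    laChoice decoyAttention (· < ·) 0 {0, 2} = 1 / 2 := by
  rw [laChoice_eq_of_forall_rel _ fun _ => Fin.pos_of_ne_zero]
  simp +decide [decoyAttention, sum_filter, sum_powerset_insert, sum_powerset_singleton]
  norm_num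

/-- LA with homogeneous preferences can violate regularity (attraction effect):
there exist a strictly positive attention index `η ∈ Δ(2^X)` on `X = {a,b,c}`
and a strict linear order such that `p(a,{a,b,c}) > p(a,{a,c})`. -/
theorem LA_attraction_effect_exists :
    ∃ (η : Finset (Fin 3) → ℝ) (r : Fin 3 → Fin 3 → Prop),
      (∀ C : Finset (Fin 3), 0 < η C) ∧
      (∑ C ∈ (Finset.univ : Finset (Fin 3)).powerset, η C = 1) ∧
      IsStrictTotalOrder (Fin 3) r ∧
      laChoice η r 0 ({0, 1, 2} : Finset (Fin 3)) >
        laChoice η r 0 ({0, 2} : Finset (Fin 3)) := by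
  refine ⟨decoyAttention, (· < ·), decoyAttention_pos, sum_powerset_decoyAttention,
    inferInstance, ?_⟩
  rw [laChoice_decoyAttention_with_decoy, laChoice_decoyAttention_without_decoy]
  norm_num
end
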